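/- arXiv:2211.14047 — 3 statements merged into one kernel-verified Lean document; each statement's English description precedes it below -/
import Mathlib

section
/- For all measurable functions f, g : ℝ → ℝ and any p ∈ [1, ∞), the L^p norm of (x,y) ↦ xy − f(x) − g(y) over [0,1]² is at least 4^{-(p+1)/p} / 4. In particular, the function (x,y) ↦ xy cannot be approximated arbitrarily well in L^p([0,1]²) by sums of univariate functions f(x) + g(y). -/
/-!
The mixed second difference `e z - e (z + u) - e (z + v) + e (z + u + v)` annihilates every
`f x + g y`, while for `e = x y` and `u = (a, 0)`, `v = (0, b)` it is the constant `a b`.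
With `a = b = 1/2` the four translates of the box `[0, 1/2]²` lie in `[0, 1]²`, so by
translation invariance and Minkowski's inequality the `Lᵖ` norm of the constant `1/4` on
`[0, 1/2]²`, namely `(1/4)^(1 + 1/p) = 4^(-(p + 1)/p)`, is at most four times the error.
-/

open MeasureTheory Set
open scoped ENNReal

def mixedDiff {G E : Type*} [Add G] [AddGroup E] (u v : G) (e : G → E) (z : G) : E :=
  e z - e (z + u) - e (z + v) + e (z + (u + v))

section Translation

variable {G E : Type*} [MeasurableSpace G] [AddGroup G] [MeasurableAdd G]
  {μ : Measure G} [μ.IsAddRightInvariant] [NormedAddCommGroup E] {q : ℝ≥0∞}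
  {e : G → E} {s t : Set G}

theorem eLpNorm_comp_add_right_restrict_le (he : AEStronglyMeasurable e μ)
    (ht : MeasurableSet t) {v : G} (hst : MapsTo (· + v) s t) :
    eLpNorm (fun z => e (z + v)) q (μ.restrict s) ≤ eLpNorm e q (μ.restrict t) :=
  calc eLpNorm (fun z => e (z + v)) q (μ.restrict s)
      ≤ eLpNorm (e ∘ (· + v)) q (μ.restrict ((· + v) ⁻¹' t)) :=
        eLpNorm_mono_measure _ (Measure.restrict_mono hst.subset_preimage le_rfl)
    _ = eLpNorm e q (μ.restrict t) :=
        eLpNorm_comp_measurePreserving he.restrict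
          ((measurePreserving_add_right μ v).restrict_preimage ht)

theorem eLpNorm_mixedDiff_restrict_le (hq : 1 ≤ q) (he : AEStronglyMeasurable e μ)
    (ht : MeasurableSet t) {u v : G} (hs : s ⊆ t) (hu : MapsTo (· + u) s t)
    (hv : MapsTo (· + v) s t) (huv : MapsTo (· + (u + v)) s t) :
    eLpNorm (mixedDiff u v e) q (μ.restrict s) ≤ 4 * eLpNorm e q (μ.restrict t) := by
  have shift (w : G) : AEStronglyMeasurable (fun z => e (z + w)) (μ.restrict s) :=
    (he.comp_measurePreserving (measurePreserving_add_right μ w)).restrict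
  have h0 := he.restrict (s := s)
  calc eLpNorm (mixedDiff u v e) q (μ.restrict s)
      ≤ eLpNorm (fun z => e z - e (z + u) - e (z + v)) q (μ.restrict s)
          + eLpNorm (fun z => e (z + (u + v))) q (μ.restrict s) :=
        eLpNorm_add_le ((h0.sub (shift u)).sub (shift v)) (shift _) hq
    _ ≤ eLpNorm e q (μ.restrict s) + eLpNorm (fun z => e (z + u)) q (μ.restrict s)
          + eLpNorm (fun z => e (z + v)) q (μ.restrict s)
          + eLpNorm (fun z => e (z + (u + v))) q (μ.restrict s) := by
        gcongr
        refine (eLpNorm_sub_le (h0.sub (shift u)) (shift v) hq).trans ?_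
        gcongr
        exact eLpNorm_sub_le h0 (shift u) hq
    _ ≤ eLpNorm e q (μ.restrict t) + eLpNorm e q (μ.restrict t)
          + eLpNorm e q (μ.restrict t) + eLpNorm e q (μ.restrict t) :=
        add_le_add (add_le_add (add_le_add
          (eLpNorm_mono_measure e (Measure.restrict_mono hs le_rfl))
          (eLpNorm_comp_add_right_restrict_le he ht hu))
          (eLpNorm_comp_add_right_restrict_le he ht hv))
          (eLpNorm_comp_add_right_restrict_le he ht huv)
    _ = 4 * eLpNorm e q (μ.restrict t) := by ring

end Translation

theorem mixedDiff_mul_sub_separable (f g : ℝ → ℝ) (a b : ℝ) :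
    mixedDiff (a, 0) (0, b) (fun z : ℝ × ℝ => z.1 * z.2 - f z.1 - g z.2) = fun _ => a * b := by
  funext z
  simp only [mixedDiff, Prod.fst_add, Prod.snd_add, Prod.mk_add_mk, add_zero, zero_add]
  ring

theorem mapsTo_add_Icc_half_sq {a b : ℝ} (ha : a ∈ Icc (0 : ℝ) (1 / 2))
    (hb : b ∈ Icc (0 : ℝ) (1 / 2)) :
    MapsTo (· + (a, b)) (Icc (0 : ℝ) (1 / 2) ×ˢ Icc (0 : ℝ) (1 / 2))
      (Icc (0 : ℝ) 1 ×ˢ Icc (0 : ℝ) 1) := by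
  rintro z ⟨⟨hz₁, hz₁'⟩, hz₂, hz₂'⟩
  simp only [mem_prod, mem_Icc, Prod.fst_add, Prod.snd_add]
  constructor <;> constructor <;> linarith [ha.1, ha.2, hb.1, hb.2]

theorem eLpNorm_const_restrict_Icc_sq (c : ℝ) (hc : 0 ≤ c) {p : ℝ} (hp : 0 < p) :
    eLpNorm (fun _ : ℝ × ℝ => c ^ 2) (ENNReal.ofReal p)
        (volume.restrict (Icc 0 c ×ˢ Icc 0 c)) = ENNReal.ofReal ((c ^ 2) ^ (1 + 1 / p)) := by
  have hvol : volume (Icc 0 c ×ˢ Icc 0 c) = ENNReal.ofReal (c ^ 2) := by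
    rw [Measure.volume_eq_prod, Measure.prod_prod, Real.volume_Icc, sub_zero,
      ← ENNReal.ofReal_mul hc, sq]
  rw [eLpNorm_const' _ (by simpa using hp) ENNReal.ofReal_ne_top, Measure.restrict_apply_univ,
    hvol, ENNReal.toReal_ofReal hp.le, Real.enorm_of_nonneg (by positivity),
    ENNReal.ofReal_rpow_of_nonneg (by positivity) (by positivity), ← ENNReal.ofReal_mul
    (by positivity), Real.rpow_add' (by positivity) (by positivity), Real.rpow_one]

theorem stmt0 (p : ℝ) (hp : 1 ≤ p) (f g : ℝ → ℝ)
    (hf : Measurable f) (hg : Measurable g) :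
    ENNReal.ofReal ((4 : ℝ) ^ (-(p + 1) / p) / 4) ≤
      eLpNorm (fun z : ℝ × ℝ => z.1 * z.2 - f z.1 - g z.2) (ENNReal.ofReal p)
        (volume.restrict (Icc (0 : ℝ) 1 ×ˢ Icc (0 : ℝ) 1)) := by
  have hp0 : 0 < p := by linarith
  have he : Measurable fun z : ℝ × ℝ => z.1 * z.2 - f z.1 - g z.2 := by fun_prop
  have half : (1 / 2 : ℝ) ∈ Icc (0 : ℝ) (1 / 2) := by norm_num
  have zero : (0 : ℝ) ∈ Icc (0 : ℝ) (1 / 2) := by norm_num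
  have bound := eLpNorm_mixedDiff_restrict_le (μ := volume) (ENNReal.one_le_ofReal.mpr hp)
    he.aestronglyMeasurable (measurableSet_Icc.prod measurableSet_Icc)
    (prod_mono (Icc_subset_Icc le_rfl (by norm_num)) (Icc_subset_Icc le_rfl (by norm_num)))
    (mapsTo_add_Icc_half_sq half zero) (mapsTo_add_Icc_half_sq zero half)
    (by rw [Prod.mk_add_mk, add_zero, zero_add]; exact mapsTo_add_Icc_half_sq half half)
  rw [mixedDiff_mul_sub_separable, show (1 / 2 : ℝ) * (1 / 2) = (1 / 2) ^ 2 by norm_num,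
    eLpNorm_const_restrict_Icc_sq _ (by norm_num) hp0] at bound
  have hconst : ((1 / 2 : ℝ) ^ 2) ^ (1 + 1 / p) = (4 : ℝ) ^ (-(p + 1) / p) := by
    rw [show -(p + 1) / p = -(1 + 1 / p) by field_simp, Real.rpow_neg (by norm_num),
      ← Real.inv_rpow (by norm_num)]
    norm_num
  rw [hconst] at bound
  rw [ENNReal.ofReal_div_of_pos (by norm_num), ENNReal.div_le_iff (by norm_num) (by norm_num),
    mul_comm]
  simpa using bound
end

section
/- Let f : [a,b] → ℝ be monotone increasing. Then the infimum over all decreasing functions g : [a,b] → ℝ of ∫ₐᵇ |f − g|^p equals the infimum over all constant functions g of ∫ₐᵇ |f − g|^p. -/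
/-! For increasing `f` and decreasing `g`, every value `min (f s) (g s)` lies below every value
`max (f t) (g t)`: if `s ≤ t` compare through `f`, otherwise through `g`. A constant `c` squeezed
between all of them is then pointwise at least as close to `f` as `g` is, so replacing `g` by `c`
does not increase the `L^p` distance to `f`. -/

open MeasureTheory Set
open scoped ENNReal

lemma min_le_max_of_monotoneOn_of_antitoneOn {α : Type*} [LinearOrder α] {s : Set α}
    {f g : α → ℝ} (hf : MonotoneOn f s) (hg : AntitoneOn g s) {u t : α} (hu : u ∈ s)
    (ht : t ∈ s) : min (f u) (g u) ≤ max (f t) (g t) := by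
  rcases le_total u t with hut | htu
  · exact (min_le_left _ _).trans ((hf hu ht hut).trans (le_max_left _ _))
  · exact (min_le_right _ _).trans ((hg ht hu htu).trans (le_max_right _ _))

lemma exists_forall_mem_uIcc_of_monotoneOn_of_antitoneOn {α : Type*} [LinearOrder α]
    {s : Set α} {f g : α → ℝ} (hf : MonotoneOn f s) (hg : AntitoneOn g s) :
    ∃ c : ℝ, ∀ t ∈ s, c ∈ uIcc (f t) (g t) := by
  refine ⟨sSup ((fun u => min (f u) (g u)) '' s), fun t ht => ⟨?_, ?_⟩⟩
  · exact le_csSup ⟨max (f t) (g t), forall_mem_image.2 fun u hu =>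
      min_le_max_of_monotoneOn_of_antitoneOn hf hg hu ht⟩ (mem_image_of_mem _ ht)
  · exact csSup_le (image_nonempty.2 ⟨t, ht⟩) (forall_mem_image.2 fun u hu =>
      min_le_max_of_monotoneOn_of_antitoneOn hf hg hu ht)

lemma exists_const_setLIntegral_rpow_abs_sub_le {α : Type*} [LinearOrder α] [MeasurableSpace α]
    (μ : Measure α) {s : Set α} (hs : MeasurableSet s) {p : ℝ} (hp : 0 ≤ p) {f g : α → ℝ}
    (hf : MonotoneOn f s) (hg : AntitoneOn g s) :
    ∃ c : ℝ, ∫⁻ t in s, ENNReal.ofReal (|f t - c| ^ p) ∂μ ≤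
      ∫⁻ t in s, ENNReal.ofReal (|f t - g t| ^ p) ∂μ := by
  obtain ⟨c, hc⟩ := exists_forall_mem_uIcc_of_monotoneOn_of_antitoneOn hf hg
  refine ⟨c, setLIntegral_mono' hs fun t ht => ENNReal.ofReal_le_ofReal ?_⟩
  have hclose : |f t - c| ≤ |f t - g t| := by
    simpa only [abs_sub_comm] using abs_sub_left_of_mem_uIcc (hc t ht)
  exact Real.rpow_le_rpow (abs_nonneg _) hclose hp

theorem stmt2_general (a b : ℝ) (p : ℝ) (hp : 1 ≤ p)
    (f : ℝ → ℝ) (hf : MonotoneOn f (Icc a b)) :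
    sInf {I : ℝ≥0∞ | ∃ g : ℝ → ℝ, AntitoneOn g (Icc a b) ∧
        I = ∫⁻ t in Icc a b, ENNReal.ofReal (|f t - g t| ^ p)} =
    sInf {I : ℝ≥0∞ | ∃ c : ℝ,
        I = ∫⁻ t in Icc a b, ENNReal.ofReal (|f t - c| ^ p)} := by
  apply le_antisymm
  · refine sInf_le_sInf ?_
    rintro I ⟨c, rfl⟩
    exact ⟨fun _ => c, antitoneOn_const, rfl⟩
  · refine le_sInf ?_
    rintro I ⟨g, hg, rfl⟩
    obtain ⟨c, hc⟩ := exists_const_setLIntegral_rpow_abs_sub_le volume measurableSet_Icc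
      (zero_le_one.trans hp) hf hg
    exact le_trans (sInf_le ⟨c, rfl⟩) hc

theorem stmt2 (a b : ℝ) (hab : a < b) (p : ℝ) (hp : 1 ≤ p)
    (f : ℝ → ℝ) (hf : MonotoneOn f (Icc a b)) :
    sInf {I : ℝ≥0∞ | ∃ g : ℝ → ℝ, AntitoneOn g (Icc a b) ∧
        I = ∫⁻ t in Icc a b, ENNReal.ofReal (|f t - g t| ^ p)} =
    sInf {I : ℝ≥0∞ | ∃ c : ℝ,
        I = ∫⁻ t in Icc a b, ENNReal.ofReal (|f t - c| ^ p)} :=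
  stmt2_general a b p hp f hf
end

section
/- Let G : ℝⁿ → ℝ be locally Lipschitz with the property that for a.e. x, ∇G(x) ∈ {0, gr} for a fixed vector gr ∈ ℝⁿ. Then for every unit vector ξ with ξ·gr < 0 (and also for ξ·gr ≤ 0), the function t ↦ G(tξ) is nonincreasing on [0, 1]. -/
open MeasureTheory Set

/-! By Rademacher's theorem `G` is differentiable almost everywhere, so by Fubini almost every
line `t ↦ v + t • ξ` runs through points where `G` is differentiable with `∂_ξ G ∈ {0, ⟪gr, ξ⟫}`
for almost every `t`. On such a line the locally Lipschitz, hence absolutely continuous,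
function `t ↦ G (v + t • ξ)` has a.e. nonpositive derivative, and the fundamental theorem of
calculus makes it nonincreasing. The inequality `G (v + q • ξ) ≤ G (v + p • ξ)` thus holds for
almost every `v`, hence for all `v` by continuity, in particular for `v = 0`. -/

theorem LocallyLipschitz.antitone_of_ae_deriv_nonpos {f : ℝ → ℝ} (hf : LocallyLipschitz f)
    (hf' : ∀ᵐ t, deriv f t ≤ 0) : Antitone f := by
  intro a b hab
  obtain ⟨K, hK⟩ := (hf.locallyLipschitzOn (s := uIcc a b)).exists_lipschitzOnWith_of_compact
    isCompact_uIcc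
  have hint : 0 ≤ ∫ t in a..b, -deriv f t :=
    intervalIntegral.integral_nonneg_of_ae hab (hf'.mono fun _ h => by simpa using h)
  rw [intervalIntegral.integral_neg,
    hK.absolutelyContinuousOnInterval.integral_deriv_eq_sub] at hint
  linarith

section

variable {E F : Type*} [NormedAddCommGroup E] [NormedSpace ℝ E] [FiniteDimensional ℝ E]
  [MeasurableSpace E] [BorelSpace E] {μ : Measure E} [μ.IsAddHaarMeasure]
  [NormedAddCommGroup F] [NormedSpace ℝ F] [FiniteDimensional ℝ F]

theorem LocallyLipschitz.ae_differentiableAt {f : E → F} (hf : LocallyLipschitz f) :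
    ∀ᵐ x ∂μ, DifferentiableAt ℝ f x := by
  -- Rademacher on each neighbourhood where `f` is Lipschitz; second countability glues these.
  refine ae_iff.mpr <| measure_null_of_locally_null _ fun x _ => ?_
  obtain ⟨K, t, ht, hK⟩ := hf x
  refine ⟨_, inter_mem_nhdsWithin _ (interior_mem_nhds.mpr ht),
    measure_mono_null ?_ (ae_iff.mp hK.ae_differentiableWithinAt_of_mem)⟩
  rintro y ⟨hy, hyt⟩ h
  exact hy ((h (interior_subset hyt)).differentiableAt (mem_interior_iff_mem_nhds.mp hyt))

theorem quasiMeasurePreserving_add_smul (ξ : E) :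
    Measure.QuasiMeasurePreserving (fun p : E × ℝ => p.1 + p.2 • ξ) (μ.prod volume) μ := by
  have hmeas : Measurable (fun p : E × ℝ => p.1 + p.2 • ξ) := by fun_prop
  refine ⟨hmeas, Measure.AbsolutelyContinuous.mk fun s hs hμs => ?_⟩
  rw [Measure.map_apply hmeas hs, Measure.prod_apply_symm (hmeas hs)]
  simp [preimage_preimage, measure_preimage_add_right, hμs]

theorem ae_ae_add_smul_of_ae {P : E → Prop} (h : ∀ᵐ x ∂μ, P x) (ξ : E) :
    ∀ᵐ v ∂μ, ∀ᵐ t : ℝ, P (v + t • ξ) :=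
  Measure.ae_ae_of_ae_prod ((quasiMeasurePreserving_add_smul ξ).ae h)

theorem LocallyLipschitz.antitone_comp_add_smul_of_ae_fderiv_nonpos {G : E → ℝ}
    (hG : LocallyLipschitz G) {ξ : E} (hξ : ∀ᵐ x ∂μ, fderiv ℝ G x ξ ≤ 0) :
    ∀ᵐ v ∂μ, Antitone fun t : ℝ => G (v + t • ξ) := by
  filter_upwards [ae_ae_add_smul_of_ae (hG.ae_differentiableAt.and hξ) ξ] with v hv
  have hline : ContDiff ℝ 1 fun t : ℝ => v + t • ξ := by fun_prop
  refine (hG.comp hline.locallyLipschitz).antitone_of_ae_deriv_nonpos ?_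
  filter_upwards [hv] with t ⟨hdiff, hneg⟩
  have hderiv : HasDerivAt (fun t : ℝ => v + t • ξ) ξ t := by
    simpa using ((hasDerivAt_id t).smul_const ξ).const_add v
  rwa [(hdiff.hasFDerivAt.comp_hasDerivAt t hderiv).deriv]

theorem LocallyLipschitz.antitone_comp_smul_of_ae_fderiv_nonpos {G : E → ℝ}
    (hG : LocallyLipschitz G) {ξ : E} (hξ : ∀ᵐ x ∂μ, fderiv ℝ G x ξ ≤ 0) :
    Antitone fun t : ℝ => G (t • ξ) := by
  intro p q hpq
  have hGc := hG.continuous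
  have hclosed : IsClosed {v | G (v + q • ξ) ≤ G (v + p • ξ)} :=
    isClosed_le (by fun_prop) (by fun_prop)
  have hdense : Dense {v | G (v + q • ξ) ≤ G (v + p • ξ)} :=
    Measure.dense_of_ae <| (hG.antitone_comp_add_smul_of_ae_fderiv_nonpos hξ).mono
      fun v hv => hv hpq
  simpa using hclosed.closure_subset (hdense (0 : E))

end

theorem stmt18 (n : ℕ) (G : EuclideanSpace ℝ (Fin n) → ℝ)
    (hG : LocallyLipschitz G)
    (gr : EuclideanSpace ℝ (Fin n))
    (hgrad : ∀ᵐ x : EuclideanSpace ℝ (Fin n) ∂volume, DifferentiableAt ℝ G x →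
      (fderiv ℝ G x = 0 ∨ ∀ y, fderiv ℝ G x y = inner ℝ gr y)) :
    ∀ ξ : EuclideanSpace ℝ (Fin n), ‖ξ‖ = 1 → inner ℝ ξ gr ≤ (0 : ℝ) →
      AntitoneOn (fun t : ℝ => G (t • ξ)) (Icc 0 1) := by
  intro ξ _ hξgr
  have hξ : ∀ᵐ x ∂volume, fderiv ℝ G x ξ ≤ 0 := by
    filter_upwards [hgrad] with x hx
    by_cases hdiff : DifferentiableAt ℝ G x
    · rcases hx hdiff with hzero | hgr
      · simp [hzero]
      · rwa [hgr, real_inner_comm]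
    · -- `fderiv` takes the junk value `0` where `G` is not differentiable
      simp [fderiv_zero_of_not_differentiableAt hdiff]
  exact (hG.antitone_comp_smul_of_ae_fderiv_nonpos hξ).antitoneOn _
end
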